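/- Applying a morphism of fusion functors to a matrix factorization yields a chain map: if φ is a degree-n morphism between (W',W)-fusion functors U and V that vanishes when any argument is the identity and satisfies φ(…, W f_i, …) = W' φ(…, f_i, …), and Q is a matrix factorization of W with Q² = W·1, then Π(dφ) = δ(Πφ), where Πφ := φ(Q,…,Q) and δψ := V(Q) ψ + (−1)^{n+1} ψ U(Q). -/

import Mathlib

open CategoryTheory

namespace FF

universe v v' u u'

variable {C : Type u} [Category.{v} C] {D : Type u'} [Category.{v'} D]

/-- A chain of `n` composable morphisms `M₁ ⟶ M₂ ⟶ ⋯ ⟶ M_{n+1}` in `C`. -/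
structure Chain (C : Type u) [Category.{v} C] (n : ℕ) where
  obj : Fin (n + 1) → C
  map : ∀ i : Fin n, obj i.castSucc ⟶ obj i.succ

namespace Chain

variable {n : ℕ}

/-- Drop the last morphism of a chain. -/
@[reducible] def dropLast (c : Chain C (n + 1)) : Chain C n where
  obj i := c.obj i.castSucc
  map i := c.map i.castSucc

/-- Drop the first morphism of a chain. -/
@[reducible] def dropFirst (c : Chain C (n + 1)) : Chain C n where
  obj i := c.obj i.succ
  map i := c.map i.succ

/-- The subchain of `b` consecutive morphisms starting after position `a`. -/
@[reducible] def seg (c : Chain C n) (a b : ℕ) (h : a + b ≤ n) : Chain C b where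
  obj i := c.obj ⟨a + i.val, by omega⟩
  map i := c.map ⟨a + i.val, by omega⟩

/-- Apply a functor to a chain. -/
@[reducible] def mapF (F : C ⥤ D) (c : Chain C n) : Chain D n where
  obj i := F.obj (c.obj i)
  map i := F.map (c.map i)

/-- Replace the `i`-th morphism of a chain. -/
@[reducible] def update (c : Chain C n) (i : Fin n) (g : c.obj i.castSucc ⟶ c.obj i.succ) :
    Chain C n :=
  ⟨c.obj, Function.update c.map i g⟩

/-- The chain all of whose morphisms are a fixed endomorphism `q` of `X`. -/
@[reducible] def const (X : C) (q : X ⟶ X) (n : ℕ) : Chain C n :=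
  ⟨fun _ => X, fun _ => q⟩

lemma succAbove_val (p : Fin (n + 2)) (i : Fin (n + 1)) :
    (p.succAbove i).val = if i.val < p.val then i.val else i.val + 1 := by
  unfold Fin.succAbove
  split <;> rename_i hh <;>
    simp only [Fin.lt_def, Fin.coe_castSucc, Fin.val_succ] at hh ⊢
  · rw [if_pos hh]
  · rw [if_neg (by omega)]

lemma predAbove_val (p : Fin (n + 1)) (i : Fin (n + 2)) :
    (p.predAbove i).val = if p.val < i.val then i.val - 1 else i.val := by
  unfold Fin.predAbove
  split <;> rename_i hh <;> simp only [Fin.lt_def, Fin.coe_castSucc] at hh <;>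
    simp only [Fin.coe_pred, Fin.coe_castPred]
  · rw [if_pos hh]
  · rw [if_neg (by omega)]

/-- A convenient cast morphism between values of a functor on objects of a chain. -/
def fcast (c : Chain C n) (F : C ⥤ D) {i j : Fin (n + 1)} (h : i.val = j.val) :
    F.obj (c.obj i) ⟶ F.obj (c.obj j) :=
  eqToHom (congrArg F.obj (congrArg c.obj (Fin.val_injective h)))

/-- Compose the morphisms in slots `k` and `k+1` of a chain, shortening it by one. -/
@[reducible] def compress (c : Chain C (n + 1)) (k : Fin n) : Chain C n where
  obj i := c.obj ((k.succ.castSucc).succAbove i)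
  map i :=
    if h : i.val < k.val then
      eqToHom (congrArg c.obj (Fin.val_injective (by
        rw [succAbove_val]
        simp only [Fin.coe_castSucc, Fin.val_succ]
        split <;> omega))) ≫
      c.map i.castSucc ≫
      eqToHom (congrArg c.obj (Fin.val_injective (by
        rw [succAbove_val]
        simp only [Fin.coe_castSucc, Fin.val_succ]
        split <;> omega)))
    else if h2 : i.val = k.val then
      eqToHom (congrArg c.obj (Fin.val_injective (by
        rw [succAbove_val]
        simp only [Fin.coe_castSucc, Fin.val_succ]
        split <;> omega))) ≫
      (c.map ⟨i.val, by omega⟩ ≫ c.map ⟨i.val + 1, by omega⟩) ≫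
      eqToHom (congrArg c.obj (Fin.val_injective (by
        rw [succAbove_val]
        simp only [Fin.coe_castSucc, Fin.val_succ]
        split <;> omega)))
    else
      eqToHom (congrArg c.obj (Fin.val_injective (by
        rw [succAbove_val]
        simp only [Fin.coe_castSucc, Fin.val_succ]
        split <;> omega))) ≫
      c.map i.succ ≫
      eqToHom (congrArg c.obj (Fin.val_injective (by
        rw [succAbove_val]
        simp only [Fin.coe_castSucc, Fin.val_succ]
        split <;> omega)))

/-- Insert the identity morphism of the object at position `s` into a chain. -/
@[reducible] def insertId (c : Chain C n) (s : Fin (n + 1)) : Chain C (n + 1) where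
  obj i := c.obj (s.predAbove i)
  map j :=
    if h : j.val < s.val then
      eqToHom (congrArg c.obj (Fin.val_injective (by
        rw [predAbove_val]
        simp only [Fin.coe_castSucc, Fin.val_succ]
        split <;> omega))) ≫
      c.map ⟨j.val, by omega⟩ ≫
      eqToHom (congrArg c.obj (Fin.val_injective (by
        rw [predAbove_val]
        simp only [Fin.coe_castSucc, Fin.val_succ]
        split <;> omega)))
    else if h2 : j.val = s.val then
      eqToHom (congrArg c.obj (Fin.val_injective (by
        rw [predAbove_val, predAbove_val]
        simp only [Fin.coe_castSucc, Fin.val_succ]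
        split <;> split <;> omega)))
    else
      eqToHom (congrArg c.obj (Fin.val_injective (by
        rw [predAbove_val]
        simp only [Fin.coe_castSucc, Fin.val_succ]
        split <;> omega))) ≫
      c.map ⟨j.val - 1, by omega⟩ ≫
      eqToHom (congrArg c.obj (Fin.val_injective (by
        rw [predAbove_val]
        simp only [Fin.coe_castSucc, Fin.val_succ]
        split <;> omega)))

/-- The composite of all morphisms of a chain. -/
def total : ∀ {m : ℕ} (c : Chain C m), c.obj 0 ⟶ c.obj (Fin.last m)
  | 0, c => eqToHom (congrArg c.obj (Fin.val_injective (by simp)))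
  | (m + 1), c =>
      eqToHom (congrArg c.obj (Fin.val_injective (by simp))) ≫
      c.dropLast.total ≫ c.map (Fin.last m) ≫
      eqToHom (congrArg c.obj (Fin.val_injective (by simp)))

end Chain

/-- A "degree `n` morphism" between two functors. -/
abbrev DegMor (U V : C ⥤ D) (n : ℕ) : Type _ :=
  ∀ c : Chain C n, U.obj (c.obj 0) ⟶ V.obj (c.obj (Fin.last n))

/-- Cast a degree-`n` morphism along an equality of degrees. -/
def DegMor.cast {U V : C ⥤ D} {a b : ℕ} (h : a = b) (φ : DegMor U V a) :
    DegMor U V b := h ▸ φ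

open Chain in
/-- The Hochschild-type differential on morphisms between functors. -/
noncomputable def d [Preadditive D] {U V : C ⥤ D} {n : ℕ} (φ : DegMor U V n) :
    DegMor U V (n + 1) :=
  fun c =>
    (fcast c U (by simp) ≫ φ c.dropLast ≫ V.map (c.map (Fin.last n)) ≫
      fcast c V (by simp))
    + ∑ k : Fin n, ((-1 : ℤ) ^ (n - k.val)) •
        (fcast c U (by rw [succAbove_val]; simp) ≫ φ (c.compress k) ≫
         fcast c V (by
            rw [succAbove_val]
            simp only [Fin.coe_castSucc, Fin.val_succ, Fin.val_last]
            split <;> omega))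
    + ((-1 : ℤ) ^ (n + 1)) •
        (fcast c U (by simp) ≫ U.map (c.map 0) ≫ φ c.dropFirst ≫
         fcast c V (by simp))

/-- A degree-`n` morphism is *multilinear* if it is additive and `ℂ`-homogeneous in
each slot. -/
def IsMultilinear [Preadditive C] [Preadditive D] [CategoryTheory.Linear ℂ C]
    [CategoryTheory.Linear ℂ D] {U V : C ⥤ D} {n : ℕ} (φ : DegMor U V n) : Prop :=
  ∀ (c : Chain C n) (i : Fin n) (g g' : c.obj i.castSucc ⟶ c.obj i.succ) (a : ℂ),
    φ (c.update i (g + g')) = φ (c.update i g) + φ (c.update i g') ∧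
    φ (c.update i (a • g)) = a • φ (c.update i g)

/-- A morphism is *exact* if it lies in the image of the differential `d`
(at degree `0` this just means that it vanishes). -/
def IsExact [Preadditive D] {U V : C ⥤ D} : ∀ {q : ℕ}, DegMor U V q → Prop
  | 0, χ => χ = 0
  | (_ + 1), χ => ∃ ρ, χ = d ρ

/-- A morphism is *reduced* if it vanishes whenever one of its arguments is an
identity morphism. -/
def Reduced [Preadditive D] {U V : C ⥤ D} : ∀ {q : ℕ}, DegMor U V q → Prop
  | 0, _ => True
  | (k + 1), φ => ∀ (c : Chain C k) (t : Fin (k + 1)), φ (c.insertId t) = 0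

open Chain in
/-- The operator `R^{(s)}` inserting an identity at (0-indexed) position `t`. -/
noncomputable def Rop [Preadditive D] {U V : C ⥤ D} {m : ℕ}
    (φ : DegMor U V (m + 1)) (t : Fin (m + 1)) : DegMor U V m :=
  fun c => ((-1 : ℤ) ^ (m + 1 - t.val)) •
    (fcast c U (by rw [predAbove_val]; simp) ≫ φ (c.insertId t) ≫
     fcast c V (by
        rw [predAbove_val]
        simp only [Fin.val_last]
        split <;> omega))

open Chain in
/-- Vertical composition of degree morphisms. -/
def vcomp {U V W : C ⥤ D} {m k : ℕ} (ψ : DegMor V W k) (φ : DegMor U V m) :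
    DegMor U W (m + k) :=
  fun c =>
    fcast c U (by simp) ≫ φ (c.seg 0 m (by omega)) ≫ fcast c V (by simp) ≫
    ψ (c.seg m k (by omega)) ≫ fcast c W (by simp)

open Chain in
/-- Horizontal composition (tensor product) of degree morphisms. -/
def hcomp {E : Type*} [Category E] {U₁ V₁ : C ⥤ D} {U₂ V₂ : D ⥤ E} {n₁ n₂ : ℕ}
    (ψ : DegMor U₂ V₂ n₂) (φ : DegMor U₁ V₁ n₁) :
    DegMor (U₁ ⋙ U₂) (V₁ ⋙ V₂) (n₁ + n₂) :=
  fun c =>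
    fcast c (U₁ ⋙ U₂) (by simp) ≫
    U₂.map (φ (c.seg 0 n₁ (by omega))) ≫
    fcast c (V₁ ⋙ U₂) (by simp) ≫
    ψ ((c.seg n₁ n₂ (by omega)).mapF V₁) ≫
    fcast c (V₁ ⋙ V₂) (by simp)

open Chain in
/-- The identity degree-`0` morphism of a functor. -/
def idDeg (U : C ⥤ D) : DegMor U U 0 :=
  fun c => fcast c U (by simp)



def FreeMod (R : Type) [CommRing R] : Type := ℕ

namespace FreeMod

variable {R : Type} [CommRing R]

instance instFintypeFinFreeMod (m : FreeMod R) : Fintype (Fin m) := Fin.fintype m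

instance instDecidableEqFinFreeMod (m : FreeMod R) : DecidableEq (Fin m) := instDecidableEqFin m

instance : Category (FreeMod R) where
  Hom m k := Matrix (Fin k) (Fin m) R
  id m := (1 : Matrix (Fin m) (Fin m) R)
  comp {X Y Z} f g := (show Matrix (Fin Z) (Fin Y) R from g) * (show Matrix (Fin Y) (Fin X) R from f)
  id_comp f := Matrix.mul_one _
  comp_id f := Matrix.one_mul _
  assoc f g h := (Matrix.mul_assoc _ _ _).symm

instance : Preadditive (FreeMod R) where
  homGroup m k := inferInstanceAs (AddCommGroup (Matrix (Fin k) (Fin m) R))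
  add_comp := by intros P Q R' f f' g; exact Matrix.mul_add _ _ _
  comp_add := by intros P Q R' f g g'; exact Matrix.add_mul _ _ _

noncomputable instance [Algebra ℂ R] : CategoryTheory.Linear ℂ (FreeMod R) where
  homModule m k := inferInstanceAs (Module ℂ (Matrix (Fin k) (Fin m) R))
  smul_comp := by intros X Y Z r f g; exact Matrix.mul_smul _ _ _
  comp_smul := by intros X Y Z f r g; exact Matrix.smul_mul _ _ _

noncomputable instance : CategoryTheory.Linear R (FreeMod R) where
  homModule m k := inferInstanceAs (Module R (Matrix (Fin k) (Fin m) R))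
  smul_comp := by intros X Y Z r f g; exact Matrix.mul_smul _ _ _
  comp_smul := by intros X Y Z f r g; exact Matrix.smul_mul _ _ _

def unit : FreeMod R := (1 : ℕ)

noncomputable def scl (r : R) (m : FreeMod R) : m ⟶ m := r • 𝟙 m

end FreeMod



lemma chain_ext' {C : Type u} [Category.{v} C] {n : ℕ} (o : Fin (n + 1) → C)
    (m m' : ∀ i : Fin n, o i.castSucc ⟶ o i.succ) (h : ∀ i, m i = m' i) :
    Chain.mk o m = Chain.mk o m' := by
  congr 1; funext i; exact h i

/-- Applying a reduced, `W`-compatible degree-`n` morphism of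
`(W',W)`-fusion functors to a matrix factorization `Q` of `W` intertwines the
differentials: `Π(dφ) = δ(Πφ)` where `Πφ = φ(Q,…,Q)` and
`δψ = V(Q) ψ + (−1)^{n+1} ψ U(Q)`. -/
theorem Pi_chain_map (N₁ N₂ : ℕ)
    (W : MvPolynomial (Fin N₁) ℂ) (W' : MvPolynomial (Fin N₂) ℂ)
    (U V : FreeMod (MvPolynomial (Fin N₁) ℂ) ⥤ FreeMod (MvPolynomial (Fin N₂) ℂ))
    [U.Additive] [V.Additive] [Functor.Linear ℂ U] [Functor.Linear ℂ V]
    (hU : ∀ {a b : FreeMod (MvPolynomial (Fin N₁) ℂ)} (f : a ⟶ b),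
        U.map (W • f) = W' • U.map f)
    (hV : ∀ {a b : FreeMod (MvPolynomial (Fin N₁) ℂ)} (f : a ⟶ b),
        V.map (W • f) = W' • V.map f)
    {n : ℕ} (φ : DegMor U V n) (hred : Reduced φ)
    (hW : ∀ (c : Chain (FreeMod (MvPolynomial (Fin N₁) ℂ)) n) (i : Fin n),
        φ (c.update i (W • c.map i)) = W' • φ c)
    (M : FreeMod (MvPolynomial (Fin N₁) ℂ)) (Q : M ⟶ M) (hQ : Q ≫ Q = W • 𝟙 M) :
    d φ (Chain.const M Q (n + 1)) =
      φ (Chain.const M Q n) ≫ V.map Q +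
        ((-1 : ℤ) ^ (n + 1)) • (U.map Q ≫ φ (Chain.const M Q n)) := by
  classical
  have key : ∀ k : Fin n, φ ((Chain.const M Q (n + 1)).compress k) = 0 := by
    intro k
    cases n with
    | zero => exact absurd k.2 (by omega)
    | succ m =>
      -- step 1 : compress = update with W • 𝟙
      have step1 : (Chain.const M Q (m + 2)).compress k =
          (Chain.const M Q (m + 1)).update k (W • 𝟙 M) := by
        apply chain_ext'
        intro i
        by_cases h : i.val < k.val
        · rw [dif_pos h, Function.update_of_ne (by intro hik; subst hik; omega)]
          simp [Chain.const]
        · by_cases h2 : i.val = k.val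
          · have : i = k := Fin.ext h2
            subst this
            rw [dif_neg h, dif_pos rfl, Function.update_self]
            simp [Chain.const, hQ]
          · rw [dif_neg h, dif_neg h2,
              Function.update_of_ne (by intro hik; subst hik; omega)]
            simp [Chain.const]
      -- c' : const with identity in slot k
      set c' : Chain (FreeMod (MvPolynomial (Fin N₁) ℂ)) (m + 1) :=
        (Chain.const M Q (m + 1)).update k (𝟙 M) with hc'
      have step2 : (Chain.const M Q (m + 1)).update k (W • 𝟙 M) =
          c'.update k (W • c'.map k) := by
        apply chain_ext'
        intro i
        by_cases h : i = k
        · subst h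
          rw [Function.update_self, Function.update_self]
          have hci : c'.map i = 𝟙 M :=
            Function.update_self (f := (Chain.const M Q (m + 1)).map) ..
          rw [hci]
        · rw [Function.update_of_ne h, Function.update_of_ne h]
          exact (Function.update_of_ne h (𝟙 M) (Chain.const M Q (m + 1)).map).symm
      have step4 : c' = (Chain.const M Q m).insertId k := by
        apply chain_ext'
        intro i
        by_cases h : i.val < k.val
        · rw [dif_pos h, Function.update_of_ne (by intro hik; subst hik; omega)]
          simp [Chain.const]
        · by_cases h2 : i.val = k.val
          · have : i = k := Fin.ext h2
            subst this
            rw [dif_neg h, dif_pos rfl, Function.update_self]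
            simp [Chain.const]
          · rw [dif_neg h, dif_neg h2,
              Function.update_of_ne (by intro hik; subst hik; omega)]
            simp [Chain.const]
      rw [step1, step2, hW c' k, step4, hred (Chain.const M Q m) k, smul_zero]
  have hA : (Chain.const M Q (n + 1)).dropLast = Chain.const M Q n := rfl
  have hB : (Chain.const M Q (n + 1)).dropFirst = Chain.const M Q n := rfl
  unfold d
  rw [Finset.sum_eq_zero (fun k _ => by rw [key k]; simp)]
  simp only [Chain.fcast, eqToHom_refl, Category.comp_id, Category.id_comp, add_zero]

end FF
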